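/- Future-imposed inventory bounds: if a minimax-MDP admits a feasible policy π, then for every t ∈ {1,…,T} and every π-compatible partial trajectory (s₁, x₁, s₂, x₂, …, s_t, x_t) with s₁ the initial environment state and x₁ = 0, one has L_{⋆⇝t}(s_t) ≤ x_t ≤ R_{⋆⇝t}(s_t). -/

import Mathlib

/-- A minimax Markov Decision Process. -/
structure MinimaxMDP where
  /-- time horizon -/
  T : ℕ
  /-- ambient type of environment states -/
  State : Type
  /-- the ambient type of states is finite -/
  fintype_state : Fintype State
  /-- the set of environment states available at each time -/
  S : ℕ → Set State
  /-- the initial environment state -/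
  s1 : State
  /-- the environment state transition map -/
  F : ℕ → State → Set State
  /-- lower action bounds -/
  U : ℕ → State → ℝ
  /-- upper action bounds -/
  V : ℕ → State → ℝ
  /-- lower inventory bounds -/
  L : ℕ → State → ℝ
  /-- upper inventory bounds -/
  R : ℕ → State → ℝ

namespace MinimaxMDP

variable (M : MinimaxMDP)

/-- The structural hypotheses on a minimax-MDP. -/
def IsValid : Prop :=
  1 ≤ M.T ∧
  (∀ t, 1 ≤ t → t ≤ M.T → (M.S t).Nonempty) ∧
  M.s1 ∈ M.S 1 ∧
  (∀ t s, 1 ≤ t → t + 1 ≤ M.T → s ∈ M.S t → (M.F t s).Nonempty ∧ M.F t s ⊆ M.S (t + 1)) ∧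
  (∀ t s, 1 ≤ t → t + 1 ≤ M.T → s ∈ M.S t → M.U t s ≤ M.V t s) ∧
  M.L 1 M.s1 = 0 ∧ M.R 1 M.s1 = 0

/-- A compatible environment state trajectory on the time window `[α, β]`. -/
def EnvCompat (α β : ℕ) (s : ℕ → M.State) : Prop :=
  (∀ t, α ≤ t → t ≤ β → s t ∈ M.S t) ∧
  (∀ t, α ≤ t → t < β → s (t + 1) ∈ M.F t (s t))

/-- `F_{α→β}(a)`: the set of endpoints of compatible environment trajectories starting at `a`. -/
def Reach (α β : ℕ) (a : M.State) : Set M.State :=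
  {b | ∃ s : ℕ → M.State, M.EnvCompat α β s ∧ s α = a ∧ s β = b}

/-- `U_{α→β}(a, b)`: the maximal cumulative lower action bound along compatible trajectories. -/
noncomputable def Umax (α β : ℕ) (a b : M.State) : ℝ :=
  sSup {u | ∃ s : ℕ → M.State, M.EnvCompat α β s ∧ s α = a ∧ s β = b ∧
    u = ∑ t ∈ Finset.Ico α β, M.U t (s t)}

/-- `V_{α→β}(a, b)`: the minimal cumulative upper action bound along compatible trajectories. -/
noncomputable def Vmin (α β : ℕ) (a b : M.State) : ℝ :=
  sInf {v | ∃ s : ℕ → M.State, M.EnvCompat α β s ∧ s α = a ∧ s β = b ∧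
    v = ∑ t ∈ Finset.Ico α β, M.V t (s t)}

/-- `R_{β⇝α}(a)`. -/
noncomputable def Rto (β α : ℕ) (a : M.State) : ℝ :=
  sInf ((fun b => M.R β b - M.Umax α β a b) '' M.Reach α β a)

/-- `L_{β⇝α}(a)`. -/
noncomputable def Lto (β α : ℕ) (a : M.State) : ℝ :=
  sSup ((fun b => M.L β b - M.Vmin α β a b) '' M.Reach α β a)

/-- `R_{⋆⇝α}(a)`. -/
noncomputable def Rstar (α : ℕ) (a : M.State) : ℝ :=
  sInf ((fun β => M.Rto β α a) '' Set.Icc α M.T)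

/-- `L_{⋆⇝α}(a)`. -/
noncomputable def Lstar (α : ℕ) (a : M.State) : ℝ :=
  sSup ((fun β => M.Lto β α a) '' Set.Icc α M.T)

/-- `R_{⋆⇝α→[α+1]}(a)`. -/
noncomputable def RstarBr (α : ℕ) (a : M.State) : ℝ :=
  sInf ((fun b => M.Rstar (α + 1) b) '' M.F α a)

/-- `L_{⋆⇝α→[α+1]}(a)`. -/
noncomputable def LstarBr (α : ℕ) (a : M.State) : ℝ :=
  sSup ((fun b => M.Lstar (α + 1) b) '' M.F α a)

/-- The future-imposed conditions. -/
def FutureImposed : Prop :=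
  M.Lstar 1 M.s1 ≤ M.Rstar 1 M.s1 ∧
  ∀ α, 2 ≤ α → α ≤ M.T → ∀ a ∈ M.Reach 1 (α - 1) M.s1,
    M.LstarBr (α - 1) a ≤ M.RstarBr (α - 1) a

/-- A `π`-compatible partial trajectory on `[α, β]`. -/
def PiCompat (π : ℕ → M.State → ℝ → ℝ) (α β : ℕ) (s : ℕ → M.State) (x : ℕ → ℝ) : Prop :=
  M.EnvCompat α β s ∧ ∀ t, α ≤ t → t < β → x (t + 1) = x t + π t (s t) (x t)

/-- A feasible partial trajectory on `[α, β]`. -/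
def FeasibleTraj (α β : ℕ) (s : ℕ → M.State) (x : ℕ → ℝ) : Prop :=
  (∀ t, α ≤ t → t < β →
    M.U t (s t) ≤ x (t + 1) - x t ∧ x (t + 1) - x t ≤ M.V t (s t)) ∧
  (∀ t, α ≤ t → t ≤ β → M.L t (s t) ≤ x t ∧ x t ≤ M.R t (s t))

/-- A feasible policy: every `π`-compatible full trajectory is feasible. -/
def FeasiblePolicy (π : ℕ → M.State → ℝ → ℝ) : Prop :=
  ∀ s x, M.PiCompat π 1 M.T s x → s 1 = M.s1 → x 1 = 0 → M.FeasibleTraj 1 M.T s x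

end MinimaxMDP

/-! Fix a time `β ∈ [t, T]` and a compatible environment path `σ` from `s t` to a state `b` at
time `β`. Splicing `σ` onto the observed history and continuing it arbitrarily to the horizon
gives a full environment trajectory; running `π` along it reproduces `x` up to time `t` and is
feasible, so summing the action bounds from `t` to `β` and using the inventory bounds at `β` gives
`L β b - Σ V ≤ x t ≤ R β b - Σ U` along `σ`. Optimising over `σ`, `b` and `β` gives the claim. -/

namespace MinimaxMDP

variable {M : MinimaxMDP}

section Trajectories

variable {α β γ : ℕ}

theorem EnvCompat.glue {s σ : ℕ → M.State} (hs : M.EnvCompat α β s) (hσ : M.EnvCompat β γ σ)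
    (hsσ : σ β = s β) : M.EnvCompat α γ (fun τ => if τ ≤ β then s τ else σ τ) := by
  refine ⟨fun τ hατ hτγ => ?_, fun τ hατ hτγ => ?_⟩
  · by_cases hτβ : τ ≤ β
    · simpa [hτβ] using hs.1 τ hατ hτβ
    · simpa [hτβ] using hσ.1 τ (by omega) hτγ
  · rcases lt_trichotomy τ β with hτβ | rfl | hτβ
    · simpa [hτβ.le, Nat.succ_le_of_lt hτβ] using hs.2 τ hατ hτβ
    · simpa [← hsσ] using hσ.2 τ le_rfl hτγ
    · simpa [hτβ.not_ge, (Nat.lt_succ_of_lt hτβ).not_ge] using hσ.2 τ hτβ.le hτγ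

theorem IsValid.exists_envCompat (hM : M.IsValid) (hα : 1 ≤ α) (hαβ : α ≤ β) (hβ : β ≤ M.T)
    {a : M.State} (ha : a ∈ M.S α) : ∃ σ : ℕ → M.State, M.EnvCompat α β σ ∧ σ α = a := by
  induction β, hαβ using Nat.le_induction with
  | base =>
    refine ⟨fun _ => a, ⟨fun τ h₁ h₂ => ?_, fun τ h₁ h₂ => by omega⟩, rfl⟩
    obtain rfl := le_antisymm h₂ h₁
    exact ha
  | succ β hαβ ih =>
    obtain ⟨σ, hσ, hσα⟩ := ih (by omega)
    obtain ⟨⟨b, hb⟩, hFS⟩ := hM.2.2.2.1 β (σ β) (by omega) hβ (hσ.1 β hαβ le_rfl)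
    refine ⟨Function.update σ (β + 1) b, ⟨fun τ h₁ h₂ => ?_, fun τ h₁ h₂ => ?_⟩, ?_⟩
    · rcases h₂.eq_or_lt with rfl | h₂
      · simpa using hFS hb
      · simpa [Function.update_of_ne h₂.ne] using hσ.1 τ h₁ (by omega)
    · rcases (Nat.le_of_lt_succ h₂).eq_or_lt with rfl | h₂
      · simpa using hb
      · simpa [Function.update_of_ne (by omega : τ ≠ β + 1),
          Function.update_of_ne (by omega : τ + 1 ≠ β + 1)] using hσ.2 τ h₁ h₂
    · simpa [Function.update_of_ne (by omega : α ≠ β + 1)] using hσα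

theorem IsValid.reach_nonempty (hM : M.IsValid) (hα : 1 ≤ α) (hαβ : α ≤ β) (hβ : β ≤ M.T)
    {a : M.State} (ha : a ∈ M.S α) : (M.Reach α β a).Nonempty :=
  let ⟨σ, hσ, hσα⟩ := hM.exists_envCompat hα hαβ hβ ha
  ⟨σ β, σ, hσ, hσα, rfl⟩

theorem PiCompat.exists_extend {π : ℕ → M.State → ℝ → ℝ} {s s' : ℕ → M.State} {x : ℕ → ℝ}
    (hx : M.PiCompat π α β s x) (hs' : M.EnvCompat α γ s') (hss' : ∀ τ < β, s' τ = s τ) :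
    ∃ x' : ℕ → ℝ, M.PiCompat π α γ s' x' ∧ ∀ τ ≤ β, x' τ = x τ := by
  let x' : ℕ → ℝ := fun n =>
    Nat.rec (x 0) (fun k y => if k + 1 ≤ β then x (k + 1) else y + π k (s' k) y) n
  have hx'x : ∀ τ ≤ β, x' τ = x τ := by
    rintro (_ | τ) hτ
    · rfl
    · exact if_pos hτ
  refine ⟨x', ⟨hs', fun τ hατ hτγ => ?_⟩, hx'x⟩
  by_cases hτβ : τ + 1 ≤ β
  · rw [hx'x _ hτβ, hx'x τ (by omega), hss' τ hτβ, hx.2 τ hατ hτβ]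
  · exact if_neg hτβ

theorem FeasibleTraj.sum_U_le_sub_and_sub_le_sum_V {s : ℕ → M.State} {x : ℕ → ℝ}
    (hx : M.FeasibleTraj α γ s x) {t β : ℕ} (hαt : α ≤ t) (htβ : t ≤ β) (hβγ : β ≤ γ) :
    ∑ τ ∈ Finset.Ico t β, M.U τ (s τ) ≤ x β - x t ∧
      x β - x t ≤ ∑ τ ∈ Finset.Ico t β, M.V τ (s τ) := by
  rw [← Finset.sum_Ico_sub (f := x) htβ]
  constructor <;> refine Finset.sum_le_sum fun τ hτ => ?_ <;> rw [Finset.mem_Ico] at hτ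
  · exact (hx.1 τ (by omega) (by omega)).1
  · exact (hx.1 τ (by omega) (by omega)).2

end Trajectories

section Envelopes

variable {α β : ℕ} {a b : M.State} {c : ℝ}

theorem Umax_le (hb : b ∈ M.Reach α β a)
    (h : ∀ σ, M.EnvCompat α β σ → σ α = a → σ β = b → ∑ τ ∈ Finset.Ico α β, M.U τ (σ τ) ≤ c) :
    M.Umax α β a b ≤ c := by
  obtain ⟨σ, hσ, hσα, hσβ⟩ := hb
  refine csSup_le ⟨_, σ, hσ, hσα, hσβ, rfl⟩ ?_
  rintro _ ⟨σ', hσ', hσ'α, hσ'β, rfl⟩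
  exact h σ' hσ' hσ'α hσ'β

theorem le_Vmin (hb : b ∈ M.Reach α β a)
    (h : ∀ σ, M.EnvCompat α β σ → σ α = a → σ β = b → c ≤ ∑ τ ∈ Finset.Ico α β, M.V τ (σ τ)) :
    c ≤ M.Vmin α β a b := by
  obtain ⟨σ, hσ, hσα, hσβ⟩ := hb
  refine le_csInf ⟨_, σ, hσ, hσα, hσβ, rfl⟩ ?_
  rintro _ ⟨σ', hσ', hσ'α, hσ'β, rfl⟩
  exact h σ' hσ' hσ'α hσ'β

theorem le_Rto (hne : (M.Reach α β a).Nonempty)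
    (h : ∀ b ∈ M.Reach α β a, c ≤ M.R β b - M.Umax α β a b) : c ≤ M.Rto β α a :=
  le_csInf (hne.image _) (Set.forall_mem_image.2 h)

theorem Lto_le (hne : (M.Reach α β a).Nonempty)
    (h : ∀ b ∈ M.Reach α β a, M.L β b - M.Vmin α β a b ≤ c) : M.Lto β α a ≤ c :=
  csSup_le (hne.image _) (Set.forall_mem_image.2 h)

theorem le_Rstar (hα : α ≤ M.T) (h : ∀ β ∈ Set.Icc α M.T, c ≤ M.Rto β α a) : c ≤ M.Rstar α a :=
  le_csInf ((Set.nonempty_Icc.2 hα).image _) (Set.forall_mem_image.2 h)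

theorem Lstar_le (hα : α ≤ M.T) (h : ∀ β ∈ Set.Icc α M.T, M.Lto β α a ≤ c) : M.Lstar α a ≤ c :=
  csSup_le ((Set.nonempty_Icc.2 hα).image _) (Set.forall_mem_image.2 h)

end Envelopes

theorem FeasiblePolicy.inventory_bounds_along (hM : M.IsValid) {π : ℕ → M.State → ℝ → ℝ}
    (hπ : M.FeasiblePolicy π) {t : ℕ} (ht1 : 1 ≤ t) {s : ℕ → M.State} {x : ℕ → ℝ}
    (hx : M.PiCompat π 1 t s x) (hs1 : s 1 = M.s1) (hx1 : x 1 = 0)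
    {β : ℕ} (htβ : t ≤ β) (hβT : β ≤ M.T) {σ : ℕ → M.State} (hσ : M.EnvCompat t β σ)
    (hσt : σ t = s t) :
    x t + ∑ τ ∈ Finset.Ico t β, M.U τ (σ τ) ≤ M.R β (σ β) ∧
      M.L β (σ β) ≤ x t + ∑ τ ∈ Finset.Ico t β, M.V τ (σ τ) := by
  obtain ⟨tail, htail, htailβ⟩ :=
    hM.exists_envCompat (by omega) hβT le_rfl (hσ.1 β htβ le_rfl)
  set s' : ℕ → M.State := fun τ =>
    if τ ≤ β then (if τ ≤ t then s τ else σ τ) else tail τ with hs'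
  have hs'env : M.EnvCompat 1 M.T s' := (hx.1.glue hσ hσt).glue htail <| by
    rcases htβ.eq_or_lt with rfl | htβ
    · simp [htailβ, hσt]
    · simp [htβ.not_ge, htailβ]
  have hs's : ∀ τ ≤ t, s' τ = s τ := fun τ hτ => by simp [hs', hτ, hτ.trans htβ]
  have hs'σ : ∀ τ, t ≤ τ → τ ≤ β → s' τ = σ τ := fun τ h₁ h₂ => by
    rcases h₁.eq_or_lt with rfl | h₁
    · simp [hs', h₂, hσt]
    · simp [hs', h₂, h₁.not_ge]
  obtain ⟨x', hx', hx'x⟩ := hx.exists_extend hs'env fun τ hτ => hs's τ hτ.le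
  have hfeas := hπ s' x' hx' (by rw [hs's 1 ht1, hs1]) (by rw [hx'x 1 ht1, hx1])
  obtain ⟨hU, hV⟩ := hfeas.sum_U_le_sub_and_sub_le_sum_V ht1 htβ hβT
  obtain ⟨hL, hR⟩ := hfeas.2 β (by omega) hβT
  have hsum : ∀ f : ℕ → M.State → ℝ,
      ∑ τ ∈ Finset.Ico t β, f τ (s' τ) = ∑ τ ∈ Finset.Ico t β, f τ (σ τ) := fun f =>
    Finset.sum_congr rfl fun τ hτ => by
      rw [Finset.mem_Ico] at hτ
      rw [hs'σ τ hτ.1 hτ.2.le]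
  rw [hsum] at hU hV
  rw [hs'σ β htβ le_rfl] at hL hR
  rw [hx'x t le_rfl] at hU hV
  constructor <;> linarith

end MinimaxMDP

theorem futureImposed_inventory_bounds (M : MinimaxMDP) (hM : M.IsValid)
    (π : ℕ → M.State → ℝ → ℝ) (hπ : M.FeasiblePolicy π)
    (t : ℕ) (ht1 : 1 ≤ t) (htT : t ≤ M.T)
    (s : ℕ → M.State) (x : ℕ → ℝ)
    (hcompat : M.PiCompat π 1 t s x) (hs1 : s 1 = M.s1) (hx1 : x 1 = 0) :
    M.Lstar t (s t) ≤ x t ∧ x t ≤ M.Rstar t (s t) := by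
  have hst : s t ∈ M.S t := hcompat.1.1 t ht1 le_rfl
  have hreach : ∀ β ∈ Set.Icc t M.T, (M.Reach t β (s t)).Nonempty := fun β hβ =>
    hM.reach_nonempty ht1 hβ.1 hβ.2 hst
  have hbounds := fun β (hβ : β ∈ Set.Icc t M.T) σ hσ hσt =>
    hπ.inventory_bounds_along hM ht1 hcompat hs1 hx1 hβ.1 hβ.2 (σ := σ) hσ hσt
  constructor
  · refine MinimaxMDP.Lstar_le htT fun β hβ => MinimaxMDP.Lto_le (hreach β hβ) fun b hb => ?_
    have := MinimaxMDP.le_Vmin (c := M.L β b - x t) hb fun σ hσ hσt hσβ => by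
      have := (hbounds β hβ σ hσ hσt).2
      rw [hσβ] at this
      linarith
    linarith
  · refine MinimaxMDP.le_Rstar htT fun β hβ => MinimaxMDP.le_Rto (hreach β hβ) fun b hb => ?_
    have := MinimaxMDP.Umax_le (c := M.R β b - x t) hb fun σ hσ hσt hσβ => by
      have := (hbounds β hβ σ hσ hσt).1
      rw [hσβ] at this
      linarith
    linarith
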